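/- arXiv:1311.7166 — 4 statements merged into one kernel-verified Lean document; each statement's English description precedes it below -/
import Mathlib

section
/- Let h, f : ℝ² → ℝ be smooth with h_{uu} f_{vv} = h_{vv} f_{uu} on an open set, and let u, v : ℝ² → ℝ be continuously differentiable functions of (x,t) satisfying the implicit hodograph relations x + t·h_{uv}(u(x,t),v(x,t)) = f_{uv}(u(x,t),v(x,t)) and t·h_{vv}(u(x,t),v(x,t)) = f_{vv}(u(x,t),v(x,t)) on an open set where the nondegeneracy determinant D = h_{uu}(t h_{vvv} − f_{vvv})² − h_{vv}(t h_{uvv} − f_{uvv})² (divided by h_{vv}) is nonzero. Then (u,v) solves the quasilinear system u_t = h_{uv} u_x + h_{vv} v_x, v_t = h_{uu} u_x + h_{uv} v_x. -/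
noncomputable def pd1 (g : ℝ × ℝ → ℝ) (p : ℝ × ℝ) : ℝ := fderiv ℝ g p (1, 0)
noncomputable def pd2 (g : ℝ × ℝ → ℝ) (p : ℝ × ℝ) : ℝ := fderiv ℝ g p (0, 1)

lemma contDiff_pd1 {g : ℝ × ℝ → ℝ} (hg : ContDiff ℝ (⊤ : ℕ∞) g) : ContDiff ℝ (⊤ : ℕ∞) (pd1 g) :=
  (ContinuousLinearMap.apply ℝ ℝ ((1:ℝ), (0:ℝ))).contDiff.comp (hg.fderiv_right (by simp))

lemma contDiff_pd2 {g : ℝ × ℝ → ℝ} (hg : ContDiff ℝ (⊤ : ℕ∞) g) : ContDiff ℝ (⊤ : ℕ∞) (pd2 g) :=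
  (ContinuousLinearMap.apply ℝ ℝ ((0:ℝ), (1:ℝ))).contDiff.comp (hg.fderiv_right (by simp))

lemma pd_symm {g : ℝ × ℝ → ℝ} (hg : ContDiff ℝ (⊤ : ℕ∞) g) (q : ℝ × ℝ) :
    pd1 (pd2 g) q = pd2 (pd1 g) q := by
  have hsym : IsSymmSndFDerivAt ℝ g q :=
    hg.contDiffAt.isSymmSndFDerivAt (by rw [minSmoothness_of_isRCLikeNormedField]; exact WithTop.coe_le_coe.mpr le_top)
  have hdF : DifferentiableAt ℝ (fderiv ℝ g) q :=
    ((hg.fderiv_right (m := 1) (WithTop.coe_le_coe.mpr le_top)).differentiable one_ne_zero).differentiableAt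
  have e2 : fderiv ℝ (pd2 g) q = (ContinuousLinearMap.apply ℝ ℝ ((0:ℝ),(1:ℝ))).comp
      (fderiv ℝ (fderiv ℝ g) q) :=
    ((ContinuousLinearMap.apply ℝ ℝ ((0:ℝ),(1:ℝ))).hasFDerivAt.comp q hdF.hasFDerivAt).fderiv
  have e1 : fderiv ℝ (pd1 g) q = (ContinuousLinearMap.apply ℝ ℝ ((1:ℝ),(0:ℝ))).comp
      (fderiv ℝ (fderiv ℝ g) q) :=
    ((ContinuousLinearMap.apply ℝ ℝ ((1:ℝ),(0:ℝ))).hasFDerivAt.comp q hdF.hasFDerivAt).fderiv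
  simp only [pd1, pd2]
  rw [e1, e2]
  simpa using hsym (1,0) (0,1)

lemma fderiv_comp2 {g u v : ℝ × ℝ → ℝ} {p : ℝ × ℝ} (w : ℝ × ℝ)
    (hg : DifferentiableAt ℝ g (u p, v p)) (hud : DifferentiableAt ℝ u p)
    (hvd : DifferentiableAt ℝ v p) :
    fderiv ℝ (fun q => g (u q, v q)) p w
      = pd1 g (u p, v p) * fderiv ℝ u p w + pd2 g (u p, v p) * fderiv ℝ v p w := by
  have hc : HasFDerivAt (fun q => g (u q, v q))
      ((fderiv ℝ g (u p, v p)).comp ((fderiv ℝ u p).prod (fderiv ℝ v p))) p :=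
    hg.hasFDerivAt.comp p (hud.hasFDerivAt.prodMk hvd.hasFDerivAt)
  rw [hc.fderiv]
  simp only [ContinuousLinearMap.comp_apply, ContinuousLinearMap.prod_apply, pd1, pd2]
  have h1 : ((fderiv ℝ u p w, fderiv ℝ v p w) : ℝ × ℝ)
      = (fderiv ℝ u p w) • ((1:ℝ),(0:ℝ)) + (fderiv ℝ v p w) • ((0:ℝ),(1:ℝ)) := by
    simp [Prod.ext_iff]
  rw [h1, map_add, map_smul, map_smul, smul_eq_mul, smul_eq_mul]
  ring

lemma relation_deriv {g gf u v : ℝ × ℝ → ℝ} (c : ℝ) {S : Set (ℝ × ℝ)} (hS : IsOpen S)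
    (hg : Differentiable ℝ g) (hgf : Differentiable ℝ gf)
    {p : ℝ × ℝ} (hp : p ∈ S)
    (hud : DifferentiableAt ℝ u p) (hvd : DifferentiableAt ℝ v p)
    (hrel : ∀ q ∈ S, c * q.1 + q.2 * g (u q, v q) = gf (u q, v q)) (w : ℝ × ℝ) :
    c * w.1 + w.2 * g (u p, v p)
      + p.2 * (pd1 g (u p, v p) * fderiv ℝ u p w + pd2 g (u p, v p) * fderiv ℝ v p w)
      = pd1 gf (u p, v p) * fderiv ℝ u p w + pd2 gf (u p, v p) * fderiv ℝ v p w := by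
  have hA : DifferentiableAt ℝ (fun q => g (u q, v q)) p :=
    (hg (u p, v p)).comp p (hud.prodMk hvd)
  have hAf : DifferentiableAt ℝ (fun q => gf (u q, v q)) p :=
    (hgf (u p, v p)).comp p (hud.prodMk hvd)
  have hF : HasFDerivAt (fun q : ℝ × ℝ => c * q.1 + q.2 * g (u q, v q))
      (c • (ContinuousLinearMap.fst ℝ ℝ ℝ)
        + (p.2 • fderiv ℝ (fun q => g (u q, v q)) p
            + g (u p, v p) • (ContinuousLinearMap.snd ℝ ℝ ℝ))) p :=
    ((hasFDerivAt_fst.const_mul c).add (hasFDerivAt_snd.mul hA.hasFDerivAt))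
  have heq : fderiv ℝ (fun q : ℝ × ℝ => c * q.1 + q.2 * g (u q, v q)) p
      = fderiv ℝ (fun q => gf (u q, v q)) p := by
    apply Filter.EventuallyEq.fderiv_eq
    filter_upwards [hS.mem_nhds hp] with q hq using hrel q hq
  have hdf := hF.fderiv
  rw [heq] at hdf
  have happ := congrArg (fun L : ℝ × ℝ →L[ℝ] ℝ => L w) hdf.symm
  simp only [ContinuousLinearMap.add_apply, ContinuousLinearMap.smul_apply,
    ContinuousLinearMap.coe_fst', ContinuousLinearMap.coe_snd', smul_eq_mul] at happ
  rw [fderiv_comp2 w (hg.differentiableAt) hud hvd,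
    fderiv_comp2 w (hgf.differentiableAt) hud hvd] at happ
  linear_combination happ

lemma algebra_main (X Y Z X' Y' Z' a b m fuu fvv t du1 du2 dv1 dv2 : ℝ)
    (e1x : 1 + 0*a + t*(X*du1 + Y*dv1) = X'*du1 + Y'*dv1)
    (e1t : 0 + 1*a + t*(X*du2 + Y*dv2) = X'*du2 + Y'*dv2)
    (e2x : t*(Y*du1 + Z*dv1) = Y'*du1 + Z'*dv1)
    (e2t : b + t*(Y*du2 + Z*dv2) = Y'*du2 + Z'*dv2)
    (eL : X*fvv + m*Z' = Z*fuu + b*X')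
    (e0 : m*fvv = b*fuu)
    (efvv : t*b = fvv)
    (hb : b ≠ 0)
    (hDne : m*(t*Z - Z')^2 - b*(t*Y - Y')^2 ≠ 0) :
    du2 = a*du1 + b*dv1 ∧ dv2 = m*du1 + a*dv1 := by
  have efuu : fuu = t*m := by
    have hc : b*fuu = b*(t*m) := by linear_combination -e0 - m*efvv
    exact mul_left_cancel₀ hb hc
  have eL' : b*(t*X - X') = m*(t*Z - Z') := by
    linear_combination eL + X*efvv + Z*efuu
  set P := t*X - X' with hPdef
  set Q := t*Y - Y' with hQdef
  set R := t*Z - Z' with hRdef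
  have hΔ : P*R - Q^2 ≠ 0 := by
    intro h0
    exact hDne (by linear_combination b*h0 - R*eL')
  have e1 : 1 + P*du1 + Q*dv1 = 0 := by rw [hPdef, hQdef]; linear_combination e1x
  have e2 : Q*du1 + R*dv1 = 0 := by rw [hQdef, hRdef]; linear_combination e2x
  have e3 : a + P*du2 + Q*dv2 = 0 := by rw [hPdef, hQdef]; linear_combination e1t
  have e4 : b + Q*du2 + R*dv2 = 0 := by rw [hQdef, hRdef]; linear_combination e2t
  constructor
  · have key : (P*R - Q^2) * (du2 - (a*du1 + b*dv1)) = 0 := by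
      linear_combination R*e3 - Q*e4 - (a*R)*e1 + (a*Q)*e2 + (b*Q)*e1 - (b*P)*e2
    rcases mul_eq_zero.mp key with h0 | h0
    · exact absurd h0 hΔ
    · exact sub_eq_zero.mp h0
  · have key : (P*R - Q^2) * (dv2 - (m*du1 + a*dv1)) = 0 := by
      linear_combination P*e4 - Q*e3 - (m*R)*e1 + (m*Q)*e2 - (a*P)*e2 + (a*Q)*e1 - eL'
    rcases mul_eq_zero.mp key with h0 | h0
    · exact absurd h0 hΔ
    · exact sub_eq_zero.mp h0



/-- Converse hodograph transform: functions `u, v` of `(x,t)` defined implicitly by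
`x + t h_uv = f_uv`, `t h_vv = f_vv` (with `h_uu f_vv = h_vv f_uu` and the nondegeneracy
determinant nonzero) solve the quasilinear system `u_t = h_uv u_x + h_vv v_x`,
`v_t = h_uu u_x + h_uv v_x`. Here points are `p = (x,t)`. -/
theorem stmt2 (h f : ℝ × ℝ → ℝ) (hh : ContDiff ℝ (⊤ : ℕ∞) h) (hf : ContDiff ℝ (⊤ : ℕ∞) f)
    (U S : Set (ℝ × ℝ)) (hUopen : IsOpen U) (hSopen : IsOpen S)
    (u v : ℝ × ℝ → ℝ) (hu : ContDiffOn ℝ 1 u S) (hv : ContDiffOn ℝ 1 v S)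
    (hmem : ∀ p ∈ S, (u p, v p) ∈ U)
    (hlin : ∀ q ∈ U, pd1 (pd1 h) q * pd2 (pd2 f) q = pd2 (pd2 h) q * pd1 (pd1 f) q)
    (hod1 : ∀ p ∈ S, p.1 + p.2 * pd2 (pd1 h) (u p, v p) = pd2 (pd1 f) (u p, v p))
    (hod2 : ∀ p ∈ S, p.2 * pd2 (pd2 h) (u p, v p) = pd2 (pd2 f) (u p, v p))
    (hvvne : ∀ p ∈ S, pd2 (pd2 h) (u p, v p) ≠ 0)
    (hD : ∀ p ∈ S,
      pd1 (pd1 h) (u p, v p) *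
        (p.2 * pd2 (pd2 (pd2 h)) (u p, v p) - pd2 (pd2 (pd2 f)) (u p, v p)) ^ 2
      - pd2 (pd2 h) (u p, v p) *
        (p.2 * pd2 (pd2 (pd1 h)) (u p, v p) - pd2 (pd2 (pd1 f)) (u p, v p)) ^ 2 ≠ 0) :
    ∀ p ∈ S,
      pd2 u p = pd2 (pd1 h) (u p, v p) * pd1 u p + pd2 (pd2 h) (u p, v p) * pd1 v p ∧
      pd2 v p = pd1 (pd1 h) (u p, v p) * pd1 u p + pd2 (pd1 h) (u p, v p) * pd1 v p := by
  intro p hp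
  have hup : (u p, v p) ∈ U := hmem p hp
  have hud : DifferentiableAt ℝ u p :=
    (hu.differentiableOn one_ne_zero).differentiableAt (hSopen.mem_nhds hp)
  have hvd : DifferentiableAt ℝ v p :=
    (hv.differentiableOn one_ne_zero).differentiableAt (hSopen.mem_nhds hp)
  -- smoothness of all the partial derivatives
  have ch1 : ContDiff ℝ (⊤ : ℕ∞) (pd1 h) := contDiff_pd1 hh
  have ch2 : ContDiff ℝ (⊤ : ℕ∞) (pd2 h) := contDiff_pd2 hh
  have ch11 : ContDiff ℝ (⊤ : ℕ∞) (pd1 (pd1 h)) := contDiff_pd1 ch1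
  have ch21 : ContDiff ℝ (⊤ : ℕ∞) (pd2 (pd1 h)) := contDiff_pd2 ch1
  have ch22 : ContDiff ℝ (⊤ : ℕ∞) (pd2 (pd2 h)) := contDiff_pd2 ch2
  have cf1 : ContDiff ℝ (⊤ : ℕ∞) (pd1 f) := contDiff_pd1 hf
  have cf2 : ContDiff ℝ (⊤ : ℕ∞) (pd2 f) := contDiff_pd2 hf
  have cf11 : ContDiff ℝ (⊤ : ℕ∞) (pd1 (pd1 f)) := contDiff_pd1 cf1
  have cf21 : ContDiff ℝ (⊤ : ℕ∞) (pd2 (pd1 f)) := contDiff_pd2 cf1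
  have cf22 : ContDiff ℝ (⊤ : ℕ∞) (pd2 (pd2 f)) := contDiff_pd2 cf2
  -- symmetry facts
  have hsymm_h : pd1 (pd2 h) = pd2 (pd1 h) := funext (pd_symm hh)
  have hsymm_f : pd1 (pd2 f) = pd2 (pd1 f) := funext (pd_symm hf)
  have s1 : pd1 (pd2 (pd1 h)) (u p, v p) = pd2 (pd1 (pd1 h)) (u p, v p) := pd_symm ch1 _
  have s2 : pd1 (pd2 (pd1 f)) (u p, v p) = pd2 (pd1 (pd1 f)) (u p, v p) := pd_symm cf1 _
  have s3 : pd1 (pd2 (pd2 h)) (u p, v p) = pd2 (pd2 (pd1 h)) (u p, v p) := by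
    rw [pd_symm ch2 (u p, v p), hsymm_h]
  have s4 : pd1 (pd2 (pd2 f)) (u p, v p) = pd2 (pd2 (pd1 f)) (u p, v p) := by
    rw [pd_symm cf2 (u p, v p), hsymm_f]
  -- the four derivative relations
  have r1x : (1:ℝ) * ((1:ℝ),(0:ℝ)).1 + ((1:ℝ),(0:ℝ)).2 * pd2 (pd1 h) (u p, v p)
      + p.2 * (pd1 (pd2 (pd1 h)) (u p, v p) * pd1 u p + pd2 (pd2 (pd1 h)) (u p, v p) * pd1 v p)
      = pd1 (pd2 (pd1 f)) (u p, v p) * pd1 u p + pd2 (pd2 (pd1 f)) (u p, v p) * pd1 v p :=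
    relation_deriv 1 hSopen (ch21.differentiable (by simp)) (cf21.differentiable (by simp)) hp hud hvd
      (fun q hq => by rw [one_mul]; exact hod1 q hq) ((1:ℝ),(0:ℝ))
  have r1t : (1:ℝ) * ((0:ℝ),(1:ℝ)).1 + ((0:ℝ),(1:ℝ)).2 * pd2 (pd1 h) (u p, v p)
      + p.2 * (pd1 (pd2 (pd1 h)) (u p, v p) * pd2 u p + pd2 (pd2 (pd1 h)) (u p, v p) * pd2 v p)
      = pd1 (pd2 (pd1 f)) (u p, v p) * pd2 u p + pd2 (pd2 (pd1 f)) (u p, v p) * pd2 v p :=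
    relation_deriv 1 hSopen (ch21.differentiable (by simp)) (cf21.differentiable (by simp)) hp hud hvd
      (fun q hq => by rw [one_mul]; exact hod1 q hq) ((0:ℝ),(1:ℝ))
  have r2x : (0:ℝ) * ((1:ℝ),(0:ℝ)).1 + ((1:ℝ),(0:ℝ)).2 * pd2 (pd2 h) (u p, v p)
      + p.2 * (pd1 (pd2 (pd2 h)) (u p, v p) * pd1 u p + pd2 (pd2 (pd2 h)) (u p, v p) * pd1 v p)
      = pd1 (pd2 (pd2 f)) (u p, v p) * pd1 u p + pd2 (pd2 (pd2 f)) (u p, v p) * pd1 v p :=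
    relation_deriv 0 hSopen (ch22.differentiable (by simp)) (cf22.differentiable (by simp)) hp hud hvd
      (fun q hq => by rw [zero_mul, zero_add]; exact hod2 q hq) ((1:ℝ),(0:ℝ))
  have r2t : (0:ℝ) * ((0:ℝ),(1:ℝ)).1 + ((0:ℝ),(1:ℝ)).2 * pd2 (pd2 h) (u p, v p)
      + p.2 * (pd1 (pd2 (pd2 h)) (u p, v p) * pd2 u p + pd2 (pd2 (pd2 h)) (u p, v p) * pd2 v p)
      = pd1 (pd2 (pd2 f)) (u p, v p) * pd2 u p + pd2 (pd2 (pd2 f)) (u p, v p) * pd2 v p :=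
    relation_deriv 0 hSopen (ch22.differentiable (by simp)) (cf22.differentiable (by simp)) hp hud hvd
      (fun q hq => by rw [zero_mul, zero_add]; exact hod2 q hq) ((0:ℝ),(1:ℝ))
  rw [s1, s2] at r1x r1t
  rw [s3, s4] at r2x r2t
  -- derivative of the linear-degeneracy relation in the v-direction
  have dm : DifferentiableAt ℝ (pd1 (pd1 h)) (u p, v p) :=
    (ch11.differentiable (by simp)).differentiableAt
  have dfvv : DifferentiableAt ℝ (pd2 (pd2 f)) (u p, v p) :=
    (cf22.differentiable (by simp)).differentiableAt
  have db : DifferentiableAt ℝ (pd2 (pd2 h)) (u p, v p) :=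
    (ch22.differentiable (by simp)).differentiableAt
  have dfuu : DifferentiableAt ℝ (pd1 (pd1 f)) (u p, v p) :=
    (cf11.differentiable (by simp)).differentiableAt
  have hL1 : HasFDerivAt (fun q => pd1 (pd1 h) q * pd2 (pd2 f) q)
      (pd1 (pd1 h) (u p, v p) • fderiv ℝ (pd2 (pd2 f)) (u p, v p)
        + pd2 (pd2 f) (u p, v p) • fderiv ℝ (pd1 (pd1 h)) (u p, v p)) (u p, v p) :=
    dm.hasFDerivAt.mul dfvv.hasFDerivAt
  have hL2 : HasFDerivAt (fun q => pd2 (pd2 h) q * pd1 (pd1 f) q)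
      (pd2 (pd2 h) (u p, v p) • fderiv ℝ (pd1 (pd1 f)) (u p, v p)
        + pd1 (pd1 f) (u p, v p) • fderiv ℝ (pd2 (pd2 h)) (u p, v p)) (u p, v p) :=
    db.hasFDerivAt.mul dfuu.hasFDerivAt
  have hfd : fderiv ℝ (fun q => pd1 (pd1 h) q * pd2 (pd2 f) q) (u p, v p)
      = fderiv ℝ (fun q => pd2 (pd2 h) q * pd1 (pd1 f) q) (u p, v p) := by
    apply Filter.EventuallyEq.fderiv_eq
    filter_upwards [hUopen.mem_nhds hup] with q hq using hlin q hq
  have eL0 : (pd1 (pd1 h) (u p, v p) • fderiv ℝ (pd2 (pd2 f)) (u p, v p)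
        + pd2 (pd2 f) (u p, v p) • fderiv ℝ (pd1 (pd1 h)) (u p, v p)) ((0:ℝ),(1:ℝ))
      = (pd2 (pd2 h) (u p, v p) • fderiv ℝ (pd1 (pd1 f)) (u p, v p)
        + pd1 (pd1 f) (u p, v p) • fderiv ℝ (pd2 (pd2 h)) (u p, v p)) ((0:ℝ),(1:ℝ)) := by
    rw [← hL1.fderiv, ← hL2.fderiv, hfd]
  have eL : pd1 (pd1 h) (u p, v p) * pd2 (pd2 (pd2 f)) (u p, v p)
        + pd2 (pd2 f) (u p, v p) * pd2 (pd1 (pd1 h)) (u p, v p)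
      = pd2 (pd2 h) (u p, v p) * pd2 (pd1 (pd1 f)) (u p, v p)
        + pd1 (pd1 f) (u p, v p) * pd2 (pd2 (pd2 h)) (u p, v p) := by
    simp only [ContinuousLinearMap.add_apply, ContinuousLinearMap.smul_apply,
      smul_eq_mul] at eL0
    exact eL0
  exact algebra_main (pd2 (pd1 (pd1 h)) (u p, v p)) (pd2 (pd2 (pd1 h)) (u p, v p))
    (pd2 (pd2 (pd2 h)) (u p, v p)) (pd2 (pd1 (pd1 f)) (u p, v p))
    (pd2 (pd2 (pd1 f)) (u p, v p)) (pd2 (pd2 (pd2 f)) (u p, v p))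
    (pd2 (pd1 h) (u p, v p)) (pd2 (pd2 h) (u p, v p)) (pd1 (pd1 h) (u p, v p))
    (pd1 (pd1 f) (u p, v p)) (pd2 (pd2 f) (u p, v p)) p.2
    (pd1 u p) (pd2 u p) (pd1 v p) (pd2 v p)
    (by linear_combination r1x) (by linear_combination r1t)
    (by linear_combination r2x) (by linear_combination r2t)
    (by linear_combination eL) (hlin _ hup) (hod2 p hp) (hvvne p hp) (hD p hp)
end

section
/- Let A > B ≥ 0 with A + B > 0, and define F(r) = log((√(B+A) + √(A−r))/√(B+r)) for −B < r < A. Then at r₀ = (2A−B)/3 and t₀ = 3√3/(4(A+B)) the gradient catastrophe conditions hold: t₀ + F'(r₀) = 0 and F''(r₀) = 0. Moreover F'''(r₀) = −81√3/(16(A+B)³). -/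
/-!
With `p r = (A - r) * (B + r) ^ 2`, the first derivative is `F' = -(√(A + B) / 2) * p ^ (-1/2)`,
so `F'' = (√(A + B) / 4) * p' * p ^ (-3/2)`. Since `p' r = (B + r) * (2A - B - 3r)` vanishes at
`r₀ = (2A - B) / 3`, so does `F''`, and `F'''(r₀) = (√(A + B) / 4) * p''(r₀) * p(r₀) ^ (-3/2)`.
Everything is then explicit because `p(r₀) = 4 (A + B)³ / 27` is a perfect square,
`(2 a³)²` with `a = √((A + B) / 3)`.
-/

open Real Set

namespace GradientCatastrophe

def cubic (A B r : ℝ) : ℝ := (A - r) * (B + r) ^ 2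

variable {A B r : ℝ}

lemma hasDerivAt_cubic (A B r : ℝ) :
    HasDerivAt (cubic A B) ((B + r) * (2 * A - B - 3 * r)) r :=
  (((hasDerivAt_id' r).const_sub A).mul (((hasDerivAt_id' r).const_add B).pow 2)).congr_deriv
    (by simp only [Pi.pow_apply]; ring)

lemma hasDerivAt_cubic_deriv (A B r : ℝ) :
    HasDerivAt (fun r => (B + r) * (2 * A - B - 3 * r)) (2 * A - 4 * B - 6 * r) r :=
  (((hasDerivAt_id' r).const_add B).mul
    (((hasDerivAt_id' r).const_mul 3).const_sub (2 * A - B))).congr_deriv (by ring)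

lemma cubic_pos (hr : r ∈ Ioo (-B) A) : 0 < cubic A B r :=
  mul_pos (by linarith [hr.2]) (pow_pos (by linarith [hr.1]) 2)

lemma cubic_eq_sq (hr : r ≤ A) : cubic A B r = (√(A - r) * (B + r)) ^ 2 := by
  rw [cubic, mul_pow, sq_sqrt (by linarith)]

lemma cubic_catastrophe_point (h : 0 ≤ A + B) :
    cubic A B ((2 * A - B) / 3) = (2 * √((A + B) / 3) ^ 3) ^ 2 := by
  rw [cubic, show (2 * √((A + B) / 3) ^ 3) ^ 2 = 4 * (√((A + B) / 3) ^ 2) ^ 3 by ring,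
    sq_sqrt (by linarith)]
  ring

lemma sq_rpow_intCast_div_two {x : ℝ} (hx : 0 ≤ x) (n : ℤ) :
    (x ^ 2) ^ ((n : ℝ) / 2) = x ^ n := by
  rw [← rpow_natCast, ← rpow_mul hx, Nat.cast_ofNat, mul_div_cancel₀ _ two_ne_zero, rpow_intCast]

lemma sq_rpow_neg_half {x : ℝ} (hx : 0 ≤ x) : (x ^ 2) ^ (-1 / 2 : ℝ) = x⁻¹ := by
  simpa using sq_rpow_intCast_div_two hx (-1)

lemma sq_rpow_neg_three_halves {x : ℝ} (hx : 0 ≤ x) : (x ^ 2) ^ (-3 / 2 : ℝ) = (x ^ 3)⁻¹ := by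
  simpa using sq_rpow_intCast_div_two hx (-3)

lemma sqrt_add_eq_sqrt_three_mul (A B : ℝ) : √(B + A) = √3 * √((A + B) / 3) := by
  rw [← sqrt_mul (by norm_num)]
  ring_nf

lemma hasDerivAt_log_ratio (hr : r ∈ Ioo (-B) A) :
    HasDerivAt (fun r => log ((√(B + A) + √(A - r)) / √(B + r)))
      (-(√(B + A) / 2) * cubic A B r ^ (-1 / 2 : ℝ)) r := by
  obtain ⟨hBr, hAr⟩ := hr
  have hA : 0 < A - r := by linarith
  have hB : 0 < B + r := by linarith
  have ha : 0 < √(A - r) := sqrt_pos.2 hA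
  have hb : 0 < √(B + r) := sqrt_pos.2 hB
  have hsA := ((hasDerivAt_id' r).const_sub A).sqrt hA.ne'
  have hsB := ((hasDerivAt_id' r).const_add B).sqrt hB.ne'
  have hq := (hsA.const_add √(B + A)).div hsB hb.ne'
  have hq_pos : 0 < (√(B + A) + √(A - r)) / √(B + r) := by positivity
  refine (hq.log hq_pos.ne').congr_deriv ?_
  rw [cubic_eq_sq hAr.le, sq_rpow_neg_half (by positivity), Pi.div_apply]
  have hc2 : √(B + A) ^ 2 = B + A := sq_sqrt (by linarith)
  have ha2 : √(A - r) ^ 2 = A - r := sq_sqrt hA.le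
  have hb2 : √(B + r) ^ 2 = B + r := sq_sqrt hB.le
  field_simp
  linear_combination (√(A - r) * √(B + A) + √(B + A) ^ 2 - (B + r)) * hb2
    + (B + r) * (hc2 - ha2)

lemma hasDerivAt_cubic_rpow_neg_half (c : ℝ) (hr : cubic A B r ≠ 0) :
    HasDerivAt (fun r => -(c / 2) * cubic A B r ^ (-1 / 2 : ℝ))
      (c / 4 * ((B + r) * (2 * A - B - 3 * r)) * cubic A B r ^ (-3 / 2 : ℝ)) r :=
  (((hasDerivAt_cubic A B r).rpow_const (Or.inl hr)).const_mul _).congr_deriv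
    (by norm_num; ring)

lemma hasDerivAt_cubic_deriv_mul_rpow_neg_three_halves (c : ℝ) (hr : cubic A B r ≠ 0) :
    HasDerivAt (fun r => c / 4 * ((B + r) * (2 * A - B - 3 * r)) * cubic A B r ^ (-3 / 2 : ℝ))
      (c / 4 * ((2 * A - 4 * B - 6 * r) * cubic A B r ^ (-3 / 2 : ℝ)
        - 3 / 2 * ((B + r) * (2 * A - B - 3 * r)) ^ 2 * cubic A B r ^ (-5 / 2 : ℝ))) r :=
  (((hasDerivAt_cubic_deriv A B r).const_mul _).mul
    ((hasDerivAt_cubic A B r).rpow_const (Or.inl hr))).congr_deriv (by norm_num; ring)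

end GradientCatastrophe

open GradientCatastrophe

theorem stmt7_general (A B : ℝ) (hsum : 0 < A + B)
    (F : ℝ → ℝ)
    (hF : F = fun r =>
      Real.log ((Real.sqrt (B + A) + Real.sqrt (A - r)) / Real.sqrt (B + r))) :
    3 * Real.sqrt 3 / (4 * (A + B)) + deriv F ((2 * A - B) / 3) = 0 ∧
    deriv (deriv F) ((2 * A - B) / 3) = 0 ∧
    deriv (deriv (deriv F)) ((2 * A - B) / 3) = -81 * Real.sqrt 3 / (16 * (A + B) ^ 3) := by
  have hr₀ : (2 * A - B) / 3 ∈ Ioo (-B) A := ⟨by linarith, by linarith⟩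
  set c := √(B + A)
  set r₀ := (2 * A - B) / 3
  have h₁ : EqOn (deriv F) (fun r => -(c / 2) * cubic A B r ^ (-1 / 2 : ℝ)) (Ioo (-B) A) :=
    fun r hr => hF ▸ (hasDerivAt_log_ratio hr).deriv
  have h₂ : EqOn (deriv (deriv F))
      (fun r => c / 4 * ((B + r) * (2 * A - B - 3 * r)) * cubic A B r ^ (-3 / 2 : ℝ))
      (Ioo (-B) A) := fun r hr =>
    (h₁.deriv isOpen_Ioo hr).trans (hasDerivAt_cubic_rpow_neg_half c (cubic_pos hr).ne').deriv
  have h₃ := (h₂.deriv isOpen_Ioo hr₀).trans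
    (hasDerivAt_cubic_deriv_mul_rpow_neg_three_halves c (cubic_pos hr₀).ne').deriv
  have hp' : 2 * A - B - 3 * r₀ = 0 := by ring
  have hp'' : 2 * A - 4 * B - 6 * r₀ = -2 * (A + B) := by ring
  obtain ⟨a, ha, hsum_eq, hc, hcubic⟩ : ∃ a, 0 < a ∧ A + B = 3 * a ^ 2 ∧ c = √3 * a ∧
      cubic A B r₀ = (2 * a ^ 3) ^ 2 :=
    ⟨_, sqrt_pos.2 (by linarith), by rw [sq_sqrt (by linarith)]; ring,
      sqrt_add_eq_sqrt_three_mul A B, cubic_catastrophe_point hsum.le⟩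
  rw [h₁ hr₀, h₂ hr₀, h₃]
  beta_reduce
  rw [hp', hp'', hcubic, hc, hsum_eq, sq_rpow_neg_half (by positivity),
    sq_rpow_neg_three_halves (by positivity)]
  refine ⟨?_, by simp, ?_⟩
  · field_simp
    ring
  · rw [mul_zero, zero_pow two_ne_zero, mul_zero, zero_mul, sub_zero]
    field_simp
    ring

/-- Gradient catastrophe point for quintic defocusing NLS with
`u₀ = A sech²x`, `v₀ = −B tanh²x`: at `r₀ = (2A−B)/3`, `t₀ = 3√3/(4(A+B))`,
one has `t₀ + F'(r₀) = 0`, `F''(r₀) = 0`, and `F'''(r₀) = −81√3/(16(A+B)³)`. -/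
theorem stmt7 (A B : ℝ) (hAB : B < A) (hB : 0 ≤ B) (hsum : 0 < A + B)
    (F : ℝ → ℝ)
    (hF : F = fun r =>
      Real.log ((Real.sqrt (B + A) + Real.sqrt (A - r)) / Real.sqrt (B + r))) :
    3 * Real.sqrt 3 / (4 * (A + B)) + deriv F ((2 * A - B) / 3) = 0 ∧
    deriv (deriv F) ((2 * A - B) / 3) = 0 ∧
    deriv (deriv (deriv F)) ((2 * A - B) / 3) = -81 * Real.sqrt 3 / (16 * (A + B) ^ 3) :=
  stmt7_general A B hsum F hF
end

section
/- Let A, B > 0 and define F(r) = (1/(2B))·log((1 + (r/A)^{1/4})/(1 − (r/A)^{1/4})) for 0 < r < A. Then at r₀ = 9A/25 and t₀ = 25√15/(72 A B) the conditions t₀ − F'(r₀) = 0 and F''(r₀) = 0 hold, and F'''(r₀) = 78125√15/(31104 A³ B). -/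
/-!
Put `s = r / A` and `q = s ^ (1/4)`. Then `F r = G (r / A) / (2B)` with
`G s = log ((1 + q) / (1 - q))` (`tanhQuarticInv`), so `F⁽ⁿ⁾ r = G⁽ⁿ⁾ (r / A) / (2 B Aⁿ)`.
Since `dq/ds = 1 / (4q³)`, the derivatives of `G` are rational in `q`: `G' = 1 / (2q³(1 - q²))`
and `G'' = (5q² - 3) / (8q⁷(1 - q²)²)`. So `G''` vanishes at `q² = 3/5`, i.e. at `s = 9/25`,
and there `G'''` only sees the derivative of the factor `5q² - 3`.
-/

open Real Set

theorem deriv_const_mul_comp_div {𝕜 : Type*} [NontriviallyNormedField 𝕜] (c a : 𝕜)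
    (g : 𝕜 → 𝕜) : deriv (fun x => c * g (x / a)) = fun x => c / a * deriv g (x / a) := by
  rw [deriv_const_mul_field']
  funext x
  simp only [div_eq_inv_mul]
  rw [deriv_comp_mul_left a⁻¹ g x, smul_eq_mul]
  ring

lemma hasDerivAt_rpow_one_div_four {s : ℝ} (hs : 0 < s) :
    HasDerivAt (fun s : ℝ => s ^ ((1 : ℝ) / 4)) (1 / (4 * (s ^ ((1 : ℝ) / 4)) ^ 3)) s := by
  have hq4 : (s ^ ((1 : ℝ) / 4)) ^ 4 = s := by
    simpa using Real.rpow_inv_natCast_pow hs.le (n := 4) (by norm_num)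
  convert Real.hasDerivAt_rpow_const (p := (1 : ℝ) / 4) (Or.inl hs.ne') using 1
  rw [Real.rpow_sub_one hs.ne']
  nth_rewrite 3 [← hq4]
  field_simp

lemma HasDerivAt.comp_rpow_one_div_four {h : ℝ → ℝ} {h' s : ℝ}
    (hh : HasDerivAt h h' (s ^ ((1 : ℝ) / 4))) (hs : 0 < s) :
    HasDerivAt (fun s => h (s ^ ((1 : ℝ) / 4))) (h' / (4 * (s ^ ((1 : ℝ) / 4)) ^ 3)) s := by
  have hcomp := hh.comp s (hasDerivAt_rpow_one_div_four hs)
  rw [mul_one_div] at hcomp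
  exact hcomp

lemma hasDerivAt_log_one_add_div_one_sub {q : ℝ} (hq : q ∈ Ioo (-1 : ℝ) 1) :
    HasDerivAt (fun q => log ((1 + q) / (1 - q))) (2 / (1 - q ^ 2)) q := by
  obtain ⟨hq₁, hq₂⟩ := hq
  have hsub : 1 - q ≠ 0 := by linarith
  have hadd : 1 + q ≠ 0 := by linarith
  have hsq : 1 - q ^ 2 ≠ 0 := by nlinarith
  convert (((hasDerivAt_id' q).const_add 1).fun_div ((hasDerivAt_id' q).const_sub 1) hsub).log
    (div_ne_zero hadd hsub) using 1
  field_simp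
  ring

/-- `2 artanh (s ^ (1/4))`, the inverse of `x ↦ tanh⁴ (x / 2)`. The derivatives below are
written as functions of `q = s ^ (1/4)`. -/
noncomputable def tanhQuarticInv (s : ℝ) : ℝ :=
  log ((1 + s ^ ((1 : ℝ) / 4)) / (1 - s ^ ((1 : ℝ) / 4)))

noncomputable def tanhQuarticInvDeriv (q : ℝ) : ℝ := 1 / (2 * q ^ 3 * (1 - q ^ 2))

noncomputable def tanhQuarticInvDeriv2 (q : ℝ) : ℝ :=
  (5 * q ^ 2 - 3) / (8 * q ^ 7 * (1 - q ^ 2) ^ 2)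

lemma hasDerivAt_tanhQuarticInvDeriv {q : ℝ} (hq : q ≠ 0) (hq' : 1 - q ^ 2 ≠ 0) :
    HasDerivAt tanhQuarticInvDeriv ((5 * q ^ 2 - 3) / (2 * q ^ 4 * (1 - q ^ 2) ^ 2)) q := by
  have hden := ((hasDerivAt_pow 3 q).const_mul 2).fun_mul ((hasDerivAt_pow 2 q).const_sub 1)
  refine ((hasDerivAt_const q (1 : ℝ)).fun_div hden (by positivity)).congr_deriv ?_
  field_simp
  ring

lemma hasDerivAt_tanhQuarticInvDeriv2_of_sq_eq {q : ℝ} (hq : q ^ 2 = 3 / 5) :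
    HasDerivAt tanhQuarticInvDeriv2 (15625 / 432) q := by
  have hnum : HasDerivAt (fun q : ℝ => 5 * q ^ 2 - 3) (10 * q) q :=
    (((hasDerivAt_pow 2 q).const_mul 5).sub_const 3).congr_deriv (by ring)
  have hden : HasDerivAt (fun q : ℝ => 8 * q ^ 7 * (1 - q ^ 2) ^ 2)
      (deriv (fun q : ℝ => 8 * q ^ 7 * (1 - q ^ 2) ^ 2) q) q :=
    hasDerivAt_deriv_iff.mpr (by fun_prop)
  have hq₀ : q ≠ 0 := by rintro rfl; norm_num at hq
  have hden₀ : 8 * q ^ 7 * (1 - q ^ 2) ^ 2 = 8 * 27 / 125 * (4 / 25) * q := by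
    rw [show q ^ 7 = q * (q ^ 2) ^ 3 by ring, hq]
    ring
  refine (hnum.fun_div hden (by rw [hden₀]; positivity)).congr_deriv ?_
  -- the numerator `5 q² - 3` vanishes at `q`, so only its derivative contributes
  rw [hden₀, hq]
  field_simp
  rw [hq]
  norm_num

lemma tanhQuarticInvDeriv_of_sq_eq {q : ℝ} (hq : q ^ 2 = 3 / 5) :
    tanhQuarticInvDeriv q = 25 / (12 * q) := by
  have hq₀ : q ≠ 0 := by rintro rfl; norm_num at hq
  rw [tanhQuarticInvDeriv, pow_succ, hq]
  field_simp
  norm_num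

lemma tanhQuarticInvDeriv2_of_sq_eq {q : ℝ} (hq : q ^ 2 = 3 / 5) : tanhQuarticInvDeriv2 q = 0 := by
  rw [tanhQuarticInvDeriv2, hq]
  norm_num

lemma rpow_one_div_four_mem_Ioo {s : ℝ} (hs : s ∈ Ioo (0 : ℝ) 1) :
    s ^ ((1 : ℝ) / 4) ∈ Ioo (0 : ℝ) 1 :=
  ⟨rpow_pos_of_pos hs.1 _, rpow_lt_one hs.1.le hs.2 (by norm_num)⟩

lemma hasDerivAt_tanhQuarticInv {s : ℝ} (hs : s ∈ Ioo (0 : ℝ) 1) :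
    HasDerivAt tanhQuarticInv (tanhQuarticInvDeriv (s ^ ((1 : ℝ) / 4))) s := by
  obtain ⟨hq₀, hq₁⟩ := rpow_one_div_four_mem_Ioo hs
  have hq₂ : 1 - (s ^ ((1 : ℝ) / 4)) ^ 2 ≠ 0 := by nlinarith
  refine ((hasDerivAt_log_one_add_div_one_sub ⟨by linarith, hq₁⟩).comp_rpow_one_div_four
    hs.1).congr_deriv ?_
  unfold tanhQuarticInvDeriv
  field_simp
  ring

lemma hasDerivAt_tanhQuarticInvDeriv_comp {s : ℝ} (hs : s ∈ Ioo (0 : ℝ) 1) :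
    HasDerivAt (fun s => tanhQuarticInvDeriv (s ^ ((1 : ℝ) / 4)))
      (tanhQuarticInvDeriv2 (s ^ ((1 : ℝ) / 4))) s := by
  obtain ⟨hq₀, hq₁⟩ := rpow_one_div_four_mem_Ioo hs
  have hq₂ : 1 - (s ^ ((1 : ℝ) / 4)) ^ 2 ≠ 0 := by nlinarith
  refine ((hasDerivAt_tanhQuarticInvDeriv hq₀.ne' hq₂).comp_rpow_one_div_four hs.1).congr_deriv ?_
  unfold tanhQuarticInvDeriv2
  field_simp
  ring

lemma eqOn_deriv_tanhQuarticInv :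
    EqOn (deriv tanhQuarticInv) (fun s => tanhQuarticInvDeriv (s ^ ((1 : ℝ) / 4))) (Ioo 0 1) :=
  fun _ hs => (hasDerivAt_tanhQuarticInv hs).deriv

lemma eqOn_deriv_deriv_tanhQuarticInv :
    EqOn (deriv (deriv tanhQuarticInv)) (fun s => tanhQuarticInvDeriv2 (s ^ ((1 : ℝ) / 4)))
      (Ioo 0 1) := fun _ hs =>
  ((eqOn_deriv_tanhQuarticInv.eventuallyEq_of_mem (isOpen_Ioo.mem_nhds hs)).deriv_eq).trans
    (hasDerivAt_tanhQuarticInvDeriv_comp hs).deriv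

lemma rpow_one_div_four_nine_div_25 : (9 / 25 : ℝ) ^ ((1 : ℝ) / 4) = √15 / 5 := by
  have h15 : (√15 / 5) ^ 4 = (9 / 25 : ℝ) := by
    rw [div_pow, show √15 ^ 4 = (√15 ^ 2) ^ 2 by ring, sq_sqrt (by norm_num)]
    norm_num
  rw [← h15, show (1 : ℝ) / 4 = ((4 : ℕ) : ℝ)⁻¹ by norm_num]
  exact pow_rpow_inv_natCast (by positivity) (by norm_num)

lemma sqrt_fifteen_div_five_sq : (√15 / 5) ^ 2 = (3 / 5 : ℝ) := by
  rw [div_pow, sq_sqrt (by norm_num)]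
  norm_num

lemma deriv_tanhQuarticInv_inflection : deriv tanhQuarticInv (9 / 25) = 25 * √15 / 36 := by
  rw [eqOn_deriv_tanhQuarticInv (by norm_num)]
  dsimp only
  rw [rpow_one_div_four_nine_div_25, tanhQuarticInvDeriv_of_sq_eq sqrt_fifteen_div_five_sq]
  have h15 : √15 ^ 2 = 15 := sq_sqrt (by norm_num)
  field_simp
  linarith

lemma deriv_deriv_tanhQuarticInv_inflection : deriv (deriv tanhQuarticInv) (9 / 25) = 0 := by
  rw [eqOn_deriv_deriv_tanhQuarticInv (by norm_num)]
  dsimp only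
  rw [rpow_one_div_four_nine_div_25, tanhQuarticInvDeriv2_of_sq_eq sqrt_fifteen_div_five_sq]

lemma deriv_deriv_deriv_tanhQuarticInv_inflection :
    deriv (deriv (deriv tanhQuarticInv)) (9 / 25) = 78125 * √15 / 15552 := by
  have hder := hasDerivAt_tanhQuarticInvDeriv2_of_sq_eq sqrt_fifteen_div_five_sq
  rw [← rpow_one_div_four_nine_div_25] at hder
  rw [(eqOn_deriv_deriv_tanhQuarticInv.eventuallyEq_of_mem
    (isOpen_Ioo.mem_nhds (by norm_num))).deriv_eq,
    (hder.comp_rpow_one_div_four (by norm_num)).deriv, rpow_one_div_four_nine_div_25,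
    pow_succ, sqrt_fifteen_div_five_sq]
  have h15 : √15 ^ 2 = 15 := sq_sqrt (by norm_num)
  field_simp
  linarith

theorem stmt9_general (A B : ℝ) (hA : 0 < A)
    (F : ℝ → ℝ)
    (hF : F = fun r => (1 / (2 * B)) *
      Real.log ((1 + (r / A) ^ ((1 : ℝ) / 4)) / (1 - (r / A) ^ ((1 : ℝ) / 4)))) :
    25 * Real.sqrt 15 / (72 * A * B) - deriv F (9 * A / 25) = 0 ∧
    deriv (deriv F) (9 * A / 25) = 0 ∧
    deriv (deriv (deriv F)) (9 * A / 25)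
      = 78125 * Real.sqrt 15 / (31104 * A ^ 3 * B) := by
  have hF' : F = fun r => 1 / (2 * B) * tanhQuarticInv (r / A) := hF
  have hr₀ : 9 * A / 25 / A = 9 / 25 := by field_simp
  simp only [hF', deriv_const_mul_comp_div, hr₀, deriv_tanhQuarticInv_inflection,
    deriv_deriv_tanhQuarticInv_inflection, deriv_deriv_deriv_tanhQuarticInv_inflection]
  exact ⟨by ring, by ring, by ring⟩

/-- Gradient catastrophe for the 'dark' initial datum `u₀ = A tanh⁴(x/B)` of quintic
defocusing NLS: at `r₀ = 9A/25`, `t₀ = 25√15/(72AB)` one has `t₀ − F'(r₀) = 0`,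
`F''(r₀) = 0`, and `F'''(r₀) = 78125√15/(31104 A³ B)`. -/
theorem stmt9 (A B : ℝ) (hA : 0 < A) (hB : 0 < B)
    (F : ℝ → ℝ)
    (hF : F = fun r => (1 / (2 * B)) *
      Real.log ((1 + (r / A) ^ ((1 : ℝ) / 4)) / (1 - (r / A) ^ ((1 : ℝ) / 4)))) :
    25 * Real.sqrt 15 / (72 * A * B) - deriv F (9 * A / 25) = 0 ∧
    deriv (deriv F) (9 * A / 25) = 0 ∧
    deriv (deriv (deriv F)) (9 * A / 25)
      = 78125 * Real.sqrt 15 / (31104 * A ^ 3 * B) :=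
  stmt9_general A B hA F hF
end

section
/- Let a > 0 and set s = √(2√33 + 6), r₊ = (a/3)(6 − √33)·s, r₋ = −(a/3)·s. Then the pair (r₊, r₋) satisfies the algebraic breaking equation ((2a + r₊)/(2a + r₋))^{3/2}·(8a + 5r₋ − r₊) = ((2a − r₊)/(2a − r₋))^{3/2}·(8a − 5r₋ + r₊), with both quantities 2a ± r₊ and 2a ± r₋ positive. -/
/-!
Put `n = s / 3`, so that `r₋ = -a n`. Eliminating `√33` from `s² = 2√33 + 6` shows that `n` is the
positive root of `27 n⁴ - 36 n² - 32`, with `n² ∈ (48/25, 49/25)`, and that `r₊ = (9/2) a n (2 - n²)`.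
Both sides of the breaking equation are then nonnegative, so it suffices to compare their squares;
after clearing denominators this is a polynomial identity in `a` and `n` which holds modulo the quartic.
-/

theorem rpow_three_halves_mul_eq_of_sq_eq {x y c d : ℝ} (hx : 0 ≤ x) (hy : 0 ≤ y) (hc : 0 ≤ c)
    (hd : 0 ≤ d) (h : x ^ 3 * c ^ 2 = y ^ 3 * d ^ 2) :
    x ^ ((3 : ℝ) / 2) * c = y ^ ((3 : ℝ) / 2) * d := by
  have sq_rpow : ∀ z : ℝ, 0 ≤ z → (z ^ ((3 : ℝ) / 2)) ^ 2 = z ^ 3 := fun z hz => by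
    rw [← Real.rpow_mul_natCast hz]
    norm_num
  refine (pow_left_inj₀ (by positivity) (by positivity) two_ne_zero).1 ?_
  rw [mul_pow, mul_pow, sq_rpow x hx, sq_rpow y hy, h]

theorem sq_mem_Ioo_of_quartic {n : ℝ} (hq : 27 * n ^ 4 - 36 * n ^ 2 - 32 = 0) :
    48 / 25 < n ^ 2 ∧ n ^ 2 < 49 / 25 := by
  constructor <;> nlinarith [sq_nonneg (n ^ 2)]

theorem breaking_equation_of_quartic (a n rp rm : ℝ) (ha : 0 < a) (hn : 0 < n)
    (hq : 27 * n ^ 4 - 36 * n ^ 2 - 32 = 0) (hrp : rp = 9 / 2 * a * n * (2 - n ^ 2))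
    (hrm : rm = -(a * n)) :
    0 < 2 * a + rp ∧ 0 < 2 * a - rp ∧ 0 < 2 * a + rm ∧ 0 < 2 * a - rm ∧
    ((2 * a + rp) / (2 * a + rm)) ^ ((3 : ℝ) / 2) * (8 * a + 5 * rm - rp)
      = ((2 * a - rp) / (2 * a - rm)) ^ ((3 : ℝ) / 2) * (8 * a - 5 * rm + rp) := by
  obtain ⟨hlo, hhi⟩ := sq_mem_Ioo_of_quartic hq
  have hn75 : n < 7 / 5 := by nlinarith
  have hp : 0 < n * (2 - n ^ 2) := by nlinarith
  have hp' : n * (2 - n ^ 2) < 2 / 5 := by nlinarith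
  have hpp : 0 < 2 * a + rp := by rw [hrp]; nlinarith
  have hpm : 0 < 2 * a - rp := by rw [hrp]; nlinarith
  have hmp : 0 < 2 * a + rm := by rw [hrm]; nlinarith
  have hmm : 0 < 2 * a - rm := by rw [hrm]; nlinarith
  refine ⟨hpp, hpm, hmp, hmm, ?_⟩
  refine rpow_three_halves_mul_eq_of_sq_eq (div_pos hpp hmp).le (div_pos hpm hmm).le ?_ ?_ ?_
  · rw [hrp, hrm]; nlinarith
  · rw [hrp, hrm]; nlinarith
  rw [div_pow, div_pow, div_mul_eq_mul_div, div_mul_eq_mul_div,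
    div_eq_div_iff (by positivity) (by positivity)]
  subst hrp hrm
  linear_combination a ^ 8 * n * (-2944 + 16960 * n ^ 2 - 41696 * n ^ 4 + 47484 * n ^ 6
    - 54081 / 2 * n ^ 8 + 7533 * n ^ 10 - 6561 / 8 * n ^ 12) * hq

/-- Breaking Riemann invariants for dispersionless cubic defocusing NLS with
`u₀(x) = a² sech² x`: at `r₊ = (a/3)(6−√33)s`, `r₋ = −(a/3)s` with `s = √(2√33+6)`,
the quantities `2a ± r_±` are positive and the algebraic breaking equation holds. -/
theorem stmt17 (a : ℝ) (ha : 0 < a) :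
    let s := Real.sqrt (2 * Real.sqrt 33 + 6)
    let rp := (a / 3) * (6 - Real.sqrt 33) * s
    let rm := -(a / 3) * s
    0 < 2 * a + rp ∧ 0 < 2 * a - rp ∧ 0 < 2 * a + rm ∧ 0 < 2 * a - rm ∧
    ((2 * a + rp) / (2 * a + rm)) ^ ((3 : ℝ) / 2) * (8 * a + 5 * rm - rp)
      = ((2 * a - rp) / (2 * a - rm)) ^ ((3 : ℝ) / 2) * (8 * a - 5 * rm + rp) := by
  intro s rp rm
  have ht : Real.sqrt 33 ^ 2 = 33 := Real.sq_sqrt (by norm_num)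
  have hs : s ^ 2 = 2 * Real.sqrt 33 + 6 := Real.sq_sqrt (by positivity)
  have hs0 : 0 < s := Real.sqrt_pos.2 (by positivity)
  refine breaking_equation_of_quartic a (s / 3) rp rm ha (by positivity) ?_ ?_ ?_
  · linear_combination ((s ^ 2 + 2 * Real.sqrt 33 + 6) / 3 - 4) * hs + 4 / 3 * ht
  · linear_combination (a * s / 6) * hs
  · ring
end
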